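/- Let α be a unit fraction, A a Latin square of order α⁻¹ on symbols {1, …, α⁻¹}, and c_k = Φ⁻¹((1 + kα)/2) for k = 0, …, α⁻¹. Define R† = ⋃_{i=1}^{α⁻¹} ⋃_{j=1}^{α⁻¹} (c_{i−1}, c_i) × (c_{j−1}, c_j) × (c_{A(i,j)−1}, c_{A(i,j)}) ⊂ ℝ³. Let (Z₁, Z₂, Z₃) ~ N((δ₁, δ₂, δ₃), I₃) and consider the test rejecting when (|Z₁|, |Z₂|, |Z₃|) ∈ R†. If δ₃ = 0, then for all δ₁, δ₂, the rejection probability equals α. -/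

import Mathlib

open MeasureTheory ProbabilityTheory Set Filter Pointwise Topology
open scoped ENNReal NNReal

/-- The standard normal cumulative distribution function Φ. -/
noncomputable def stdPhi (x : ℝ) : ℝ := ((gaussianReal 0 1) (Set.Iic x)).toReal

/-- The inverse Φ⁻¹ of the standard normal CDF. -/
noncomputable def stdPhiInv : ℝ → ℝ := Function.invFun stdPhi

/-- A Latin square of order n: each symbol occurs exactly once in each row and column. -/
def IsLatinSquare {n : ℕ} (A : Fin n → Fin n → Fin n) : Prop :=
  (∀ i, Function.Bijective (A i)) ∧ (∀ j, Function.Bijective fun i => A i j)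

/-- The law of (Z₁, Z₂, Z₃) ~ N((d₁, d₂, d₃), I₃). -/
noncomputable def gauss3 (d1 d2 d3 : ℝ) : Measure (ℝ × ℝ × ℝ) :=
  (gaussianReal d1 1).prod ((gaussianReal d2 1).prod (gaussianReal d3 1))

/-- c_k = Φ⁻¹((1 + kα)/2) with α = 1/n; c_0 = 0 and c_n = ∞. -/
noncomputable def cseq (n k : ℕ) : ℝ := stdPhiInv ((1 + (k : ℝ) / n) / 2)

/-- The interval (c_{k-1}, c_k), with c_n = ∞. -/
noncomputable def cband (n k : ℕ) : Set ℝ :=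
  if k = n then Set.Ioi (cseq n (n - 1)) else Set.Ioo (cseq n (k - 1)) (cseq n k)

/-- The Latin-square rejection region
R† = ⋃_{i,j} (c_{i−1}, c_i) × (c_{j−1}, c_j) × (c_{A(i,j)−1}, c_{A(i,j)}) ⊂ ℝ³. -/
noncomputable def Rdag (n : ℕ) (A : Fin n → Fin n → Fin n) : Set (ℝ × ℝ × ℝ) :=
  ⋃ i : Fin n, ⋃ j : Fin n,
    (cband n (i.1 + 1)) ×ˢ (cband n (j.1 + 1)) ×ˢ (cband n ((A i j).1 + 1))


namespace Aux

lemma gauss_ne_top (d : ℝ) (s : Set ℝ) : gaussianReal d 1 s ≠ ⊤ := (measure_lt_top _ _).ne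

instance (d : ℝ) : NullSingletonClass (gaussianReal d 1) :=
  ⟨fun x => gaussianReal_absolutelyContinuous d one_ne_zero (measure_singleton x)⟩

-- stdPhi b = stdPhi a + γ(Ioc a b).toReal for a ≤ b
lemma stdPhi_add_Ioc {a b : ℝ} (hab : a ≤ b) :
    stdPhi b = stdPhi a + ((gaussianReal 0 1) (Ioc a b)).toReal := by
  unfold stdPhi
  rw [← ENNReal.toReal_add (gauss_ne_top 0 _) (gauss_ne_top 0 _),
    ← measure_union (Set.Iic_disjoint_Ioc le_rfl) measurableSet_Ioc, Set.Iic_union_Ioc_eq_Iic hab]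

lemma gauss_Ioc_eq_Ioo {a b : ℝ} :
    gaussianReal 0 1 (Ioc a b) = gaussianReal 0 1 (Ioo a b) :=
  measure_congr (Ioo_ae_eq_Ioc).symm

lemma stdPhi_Ioo {a b : ℝ} (hab : a ≤ b) :
    ((gaussianReal 0 1) (Ioo a b)).toReal = stdPhi b - stdPhi a := by
  rw [← gauss_Ioc_eq_Ioo, stdPhi_add_Ioc hab]; ring

lemma strictMono_stdPhi : StrictMono stdPhi := by
  intro a b hab
  have h1 : 0 < ((gaussianReal 0 1) (Ioo a b)).toReal := by
    refine ENNReal.toReal_pos (fun h => ?_) (gauss_ne_top 0 _)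
    have := gaussianReal_absolutelyContinuous' 0 one_ne_zero h
    rw [Real.volume_Ioo] at this
    simp only [ENNReal.ofReal_eq_zero, sub_nonpos] at this
    linarith
  rw [stdPhi_Ioo hab.le] at h1; linarith

lemma map_neg_gauss : (gaussianReal 0 1).map (fun x => -1 * x) = gaussianReal 0 1 := by
  rw [show (fun x : ℝ => -1 * x) = ((-1 : ℝ) * ·) from rfl, gaussianReal_map_const_mul]
  norm_num

lemma gauss_neg_set (s : Set ℝ) (hs : MeasurableSet s) :
    gaussianReal 0 1 ((fun x => -1 * x) ⁻¹' s) = gaussianReal 0 1 s := by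
  conv_rhs => rw [← map_neg_gauss]
  rw [Measure.map_apply (by fun_prop) hs]

lemma stdPhi_neg (a : ℝ) : stdPhi (-a) = 1 - stdPhi a := by
  have h1 : gaussianReal 0 1 (Iic (-a)) = gaussianReal 0 1 (Ici a) := by
    have : (fun x : ℝ => -1 * x) ⁻¹' (Ici a) = Iic (-a) := by
      ext x
      simp only [mem_preimage, mem_Ici, mem_Iic, neg_one_mul]
      constructor <;> intro h <;> linarith
    rw [← this, gauss_neg_set _ measurableSet_Ici]
  have h2 : gaussianReal 0 1 (Ici a) = gaussianReal 0 1 (Ioi a) :=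
    measure_congr (Ioi_ae_eq_Ici).symm
  have h3 : stdPhi a + ((gaussianReal 0 1) (Ioi a)).toReal = 1 := by
    unfold stdPhi
    rw [← ENNReal.toReal_add (gauss_ne_top 0 _) (gauss_ne_top 0 _),
      ← measure_union (Iic_disjoint_Ioi le_rfl) measurableSet_Ioi, Iic_union_Ioi]
    simp
  unfold stdPhi
  rw [h1, h2]
  unfold stdPhi at h3
  linarith

lemma stdPhi_zero : stdPhi 0 = 1 / 2 := by
  have := stdPhi_neg 0
  rw [neg_zero] at this; linarith

lemma stdPhi_mem_Icc (x : ℝ) : stdPhi x ∈ Set.Icc (0:ℝ) 1 := by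
  constructor
  · exact ENNReal.toReal_nonneg
  · unfold stdPhi
    rw [← ENNReal.toReal_one]
    exact ENNReal.toReal_mono ENNReal.one_ne_top (prob_le_one)

lemma tendsto_stdPhi_atTop : Tendsto stdPhi atTop (𝓝 1) := by
  have h := tendsto_measure_Iic_atTop (gaussianReal 0 1)
  rw [measure_univ] at h
  have h2 := (ENNReal.tendsto_toReal ENNReal.one_ne_top).comp h
  simp only [ENNReal.toReal_one] at h2
  exact h2

lemma tendsto_stdPhi_atBot : Tendsto stdPhi atBot (𝓝 0) := by
  have h : Tendsto (fun x => 1 - stdPhi (-x)) atBot (𝓝 0) := by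
    have := tendsto_stdPhi_atTop.comp (tendsto_neg_atBot_atTop)
    have h2 : Tendsto (fun x : ℝ => 1 - stdPhi (-x)) atBot (𝓝 (1 - 1)) :=
      tendsto_const_nhds.sub this
    simpa using h2
  refine h.congr fun x => ?_
  rw [stdPhi_neg]; ring

lemma continuous_stdPhi : Continuous stdPhi := by
  have key : ∀ x : ℝ, stdPhi x = stdPhi 0 + ∫ t in (0:ℝ)..x, gaussianPDFReal 0 1 t := by
    intro x
    have hint : ∀ a b : ℝ, a ≤ b → (∫ t in a..b, gaussianPDFReal 0 1 t) =
        ((gaussianReal 0 1) (Ioc a b)).toReal := by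
      intro a b hab
      rw [intervalIntegral.integral_of_le hab,
        gaussianReal_apply_eq_integral 0 one_ne_zero,
        ENNReal.toReal_ofReal (setIntegral_nonneg measurableSet_Ioc
          fun t _ => gaussianPDFReal_nonneg 0 1 t)]
    rcases le_or_gt 0 x with h | h
    · rw [hint 0 x h, stdPhi_add_Ioc h]
    · rw [intervalIntegral.integral_symm x 0, hint x 0 h.le, stdPhi_add_Ioc h.le]
      ring
  have : Continuous fun x => stdPhi 0 + ∫ t in (0:ℝ)..x, gaussianPDFReal 0 1 t := by
    refine continuous_const.add ?_
    exact intervalIntegral.continuous_primitive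
      (fun a b => (integrable_gaussianPDFReal 0 1).intervalIntegrable) 0
  exact this.congr fun x => (key x).symm

lemma stdPhi_surj {p : ℝ} (hp0 : 0 < p) (hp1 : p < 1) : ∃ x, stdPhi x = p := by
  obtain ⟨a, ha⟩ := (tendsto_stdPhi_atBot.eventually (eventually_lt_nhds hp0)).exists
  obtain ⟨b, hb⟩ := (tendsto_stdPhi_atTop.eventually (eventually_gt_nhds hp1)).exists
  have hab : a ≤ b := by
    by_contra h
    push_neg at h
    have := strictMono_stdPhi h
    linarith
  have := intermediate_value_Icc hab continuous_stdPhi.continuousOn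
  obtain ⟨x, _, hx⟩ := this ⟨ha.le, hb.le⟩
  exact ⟨x, hx⟩



lemma stdPhi_stdPhiInv {p : ℝ} (hp0 : 0 < p) (hp1 : p < 1) : stdPhi (stdPhiInv p) = p :=
  Function.invFun_eq (stdPhi_surj hp0 hp1)

lemma stdPhi_cseq {n k : ℕ} (hk : k < n) :
    stdPhi (cseq n k) = (1 + (k : ℝ) / n) / 2 := by
  have hn : (0:ℝ) < n := by exact_mod_cast Nat.pos_of_ne_zero (by omega)
  have h0 : (0:ℝ) ≤ (k:ℝ) / n := div_nonneg (Nat.cast_nonneg k) hn.le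
  have h1 : (k:ℝ) / n < 1 := (div_lt_one hn).mpr (by exact_mod_cast hk)
  exact stdPhi_stdPhiInv (by linarith) (by linarith)

lemma cseq_zero {n : ℕ} (hn : 0 < n) : cseq n 0 = 0 := by
  have h := stdPhi_cseq (k := 0) hn
  simp only [Nat.cast_zero, zero_div, add_zero] at h
  exact strictMono_stdPhi.injective (by rw [h, stdPhi_zero])

lemma cseq_lt {n j k : ℕ} (hjk : j < k) (hk : k < n) : cseq n j < cseq n k := by
  have hn : (0:ℝ) < n := by exact_mod_cast Nat.pos_of_ne_zero (by omega)
  rw [← strictMono_stdPhi.lt_iff_lt, stdPhi_cseq (hjk.trans hk), stdPhi_cseq hk]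
  have hj : (j:ℝ) < k := by exact_mod_cast hjk
  have h2 : (j:ℝ)/n < (k:ℝ)/n := by gcongr
  linarith

lemma cseq_nonneg {n k : ℕ} (hk : k < n) : 0 ≤ cseq n k := by
  have hn : 0 < n := Nat.pos_of_ne_zero (by omega)
  rcases Nat.eq_zero_or_pos k with h | h
  · rw [h, cseq_zero hn]
  · rw [← cseq_zero hn]
    exact (cseq_lt h hk).le


lemma abs_pre_Ioo {a b : ℝ} (ha : 0 ≤ a) :
    abs ⁻¹' (Ioo a b) = Ioo a b ∪ Ioo (-b) (-a) := by
  ext x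
  simp only [mem_preimage, mem_Ioo, mem_union]
  rcases abs_cases x with ⟨h, h'⟩ | ⟨h, h'⟩ <;> rw [h] <;> constructor <;> intro hx
  · exact Or.inl hx
  · rcases hx with hx | hx
    · exact hx
    · exact ⟨by linarith [hx.1, hx.2], by linarith [hx.1, hx.2]⟩
  · exact Or.inr ⟨by linarith [hx.1, hx.2], by linarith [hx.1, hx.2]⟩
  · rcases hx with hx | hx
    · exact ⟨by linarith [hx.1, hx.2], by linarith [hx.1, hx.2]⟩
    · exact ⟨by linarith [hx.1, hx.2], by linarith [hx.1, hx.2]⟩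

lemma abs_pre_Ioi {c : ℝ} (hc : 0 ≤ c) :
    abs ⁻¹' (Ioi c) = Ioi c ∪ Iio (-c) := by
  ext x
  simp only [mem_preimage, mem_Ioi, mem_union, mem_Iio]
  rcases abs_cases x with ⟨h, h'⟩ | ⟨h, h'⟩ <;> rw [h]
  · constructor
    · exact Or.inl
    · rintro (hx | hx) <;> linarith
  · constructor
    · intro hx; exact Or.inr (by linarith)
    · rintro (hx | hx) <;> linarith

lemma gauss_Ioi_toReal (c : ℝ) : ((gaussianReal 0 1) (Ioi c)).toReal = 1 - stdPhi c := by
  have h3 : stdPhi c + ((gaussianReal 0 1) (Ioi c)).toReal = 1 := by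
    unfold stdPhi
    rw [← ENNReal.toReal_add (gauss_ne_top 0 _) (gauss_ne_top 0 _),
      ← measure_union (Iic_disjoint_Ioi le_rfl) measurableSet_Ioi, Iic_union_Ioi]
    simp
  linarith

lemma gauss0_abs_Ioo {a b : ℝ} (ha : 0 ≤ a) (hab : a ≤ b) :
    ((gaussianReal 0 1) (abs ⁻¹' (Ioo a b))).toReal = 2 * (stdPhi b - stdPhi a) := by
  rw [abs_pre_Ioo ha]
  have hneg : gaussianReal 0 1 (Ioo (-b) (-a)) = gaussianReal 0 1 (Ioo a b) := by
    have hpre : (fun x : ℝ => -1 * x) ⁻¹' (Ioo a b) = Ioo (-b) (-a) := by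
      ext x
      simp only [mem_preimage, mem_Ioo, neg_one_mul]
      constructor <;> intro h <;> exact ⟨by linarith [h.1, h.2], by linarith [h.1, h.2]⟩
    rw [← hpre, gauss_neg_set _ measurableSet_Ioo]
  have hdisj : Disjoint (Ioo a b) (Ioo (-b) (-a)) := by
    rw [Set.disjoint_left]
    rintro x ⟨h1, _⟩ ⟨_, h4⟩
    linarith
  rw [measure_union hdisj measurableSet_Ioo,
    ENNReal.toReal_add (gauss_ne_top 0 _) (gauss_ne_top 0 _), hneg, stdPhi_Ioo hab]
  ring

lemma gauss0_abs_Ioi {c : ℝ} (hc : 0 ≤ c) :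
    ((gaussianReal 0 1) (abs ⁻¹' (Ioi c))).toReal = 2 * (1 - stdPhi c) := by
  rw [abs_pre_Ioi hc]
  have hneg : gaussianReal 0 1 (Iio (-c)) = gaussianReal 0 1 (Ioi c) := by
    have hpre : (fun x : ℝ => -1 * x) ⁻¹' (Ioi c) = Iio (-c) := by
      ext x
      simp only [mem_preimage, mem_Ioi, mem_Iio, neg_one_mul]
      constructor <;> intro h <;> linarith
    rw [← hpre, gauss_neg_set _ measurableSet_Ioi]
  have hdisj : Disjoint (Ioi c) (Iio (-c)) := by
    rw [Set.disjoint_left]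
    intro x h1 h4
    simp only [mem_Ioi] at h1
    simp only [mem_Iio] at h4
    linarith
  rw [measure_union hdisj measurableSet_Iio,
    ENNReal.toReal_add (gauss_ne_top 0 _) (gauss_ne_top 0 _), hneg, gauss_Ioi_toReal]
  ring

lemma measurableSet_cband (n k : ℕ) : MeasurableSet (cband n k) := by
  unfold cband
  split_ifs
  · exact measurableSet_Ioi
  · exact measurableSet_Ioo

lemma gauss0_band {n k : ℕ} (hk1 : 1 ≤ k) (hkn : k ≤ n) :
    (gaussianReal 0 1) (abs ⁻¹' (cband n k)) = ENNReal.ofReal (1 / n) := by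
  have hn : 0 < n := lt_of_lt_of_le hk1 hkn
  have hnR : (0:ℝ) < n := by exact_mod_cast hn
  have htoReal : ((gaussianReal 0 1) (abs ⁻¹' (cband n k))).toReal = 1 / n := by
    unfold cband
    by_cases h : k = n
    · rw [if_pos h]
      have h1 : n - 1 < n := by omega
      rw [gauss0_abs_Ioi (cseq_nonneg h1), stdPhi_cseq h1, Nat.cast_sub hn, Nat.cast_one]
      field_simp
      ring
    · rw [if_neg h]
      have hkn' : k < n := lt_of_le_of_ne hkn h
      have hk1' : k - 1 < n := by omega
      have hle : cseq n (k - 1) ≤ cseq n k := (cseq_lt (by omega) hkn').le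
      rw [gauss0_abs_Ioo (cseq_nonneg hk1') hle, stdPhi_cseq hkn', stdPhi_cseq hk1',
        Nat.cast_sub hk1, Nat.cast_one]
      field_simp
      ring
  rw [← ENNReal.ofReal_toReal (gauss_ne_top 0 (abs ⁻¹' (cband n k))), htoReal]

lemma cband_disjoint {n k k' : ℕ} (hk1 : 1 ≤ k) (hkk' : k < k') (hk'n : k' ≤ n) :
    Disjoint (cband n k) (cband n k') := by
  have hkn : k < n := lt_of_lt_of_le hkk' hk'n
  have h1 : cband n k ⊆ Iio (cseq n k) := by
    unfold cband
    rw [if_neg hkn.ne]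
    exact Ioo_subset_Iio_self
  have h2 : cband n k' ⊆ Ioi (cseq n (k' - 1)) := by
    unfold cband
    split_ifs with h
    · subst h; exact subset_rfl
    · exact Ioo_subset_Ioi_self
  have h3 : cseq n k ≤ cseq n (k' - 1) := by
    rcases eq_or_lt_of_le (show k ≤ k' - 1 by omega) with h | h
    · rw [h]
    · exact (cseq_lt h (by omega)).le
  rw [Set.disjoint_left]
  intro x hx hx'
  have e1 := h1 hx
  have e2 := h2 hx'
  simp only [mem_Iio] at e1
  simp only [mem_Ioi] at e2
  linarith

lemma cband_cover {n : ℕ} (hn : 0 < n) {y : ℝ} (hy : 0 < y)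
    (hnot : ∀ k, 1 ≤ k → k ≤ n - 1 → y ≠ cseq n k) :
    ∃ k, 1 ≤ k ∧ k ≤ n ∧ y ∈ cband n k := by
  classical
  by_cases htop : cseq n (n - 1) < y
  · exact ⟨n, hn, le_rfl, by unfold cband; rw [if_pos rfl]; exact htop⟩
  push_neg at htop
  set P : ℕ → Prop := fun k => cseq n k < y with hP
  have hP0 : P 0 := by
    rw [hP]
    simpa [cseq_zero hn] using hy
  set m := Nat.findGreatest P (n - 1) with hm
  have hPm : P m := Nat.findGreatest_spec (Nat.zero_le _) hP0
  have hmle : m ≤ n - 1 := Nat.findGreatest_le _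
  have hmlt : m < n - 1 := by
    rcases lt_or_eq_of_le hmle with h | h
    · exact h
    · exfalso
      rw [h] at hPm
      exact absurd hPm (not_lt.mpr htop)
  have hnP : ¬ P (m + 1) :=
    Nat.findGreatest_is_greatest (Nat.lt_succ_self m) (by omega)
  have hyle : y ≤ cseq n (m + 1) := not_lt.mp hnP
  have hyne : y ≠ cseq n (m + 1) := hnot (m + 1) (by omega) (by omega)
  refine ⟨m + 1, by omega, by omega, ?_⟩
  unfold cband
  rw [if_neg (by omega)]
  simp only [Nat.add_sub_cancel]
  exact ⟨hPm, lt_of_le_of_ne hyle hyne⟩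

lemma pre_band_disjoint {n : ℕ} {i i' : Fin n} (h : i ≠ i') :
    Disjoint (abs ⁻¹' cband n (i.1 + 1)) (abs ⁻¹' cband n (i'.1 + 1)) := by
  have h' : i.1 ≠ i'.1 := fun hh => h (Fin.ext hh)
  rcases Nat.lt_or_ge i.1 i'.1 with hlt | hge
  · exact Disjoint.preimage _ (cband_disjoint (by omega) (by omega) (by omega))
  · exact (Disjoint.preimage _ (cband_disjoint (by omega) (by omega) (by omega))).symm

lemma gauss_abs_iUnion (d : ℝ) {n : ℕ} (hn : 0 < n) :
    (gaussianReal d 1) (⋃ i : Fin n, abs ⁻¹' (cband n (i.1 + 1))) = 1 := by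
  refine le_antisymm prob_le_one ?_
  set F : Set ℝ := {0} ∪ (⋃ k ∈ Finset.Icc 1 (n - 1), {cseq n k, -(cseq n k)}) with hF
  have hFfin : F.Finite := by
    refine (Set.finite_singleton 0).union ?_
    exact Set.Finite.biUnion (Finset.finite_toSet _) fun k _ => (Set.finite_singleton _).insert _
  have hFnull : gaussianReal d 1 F = 0 := hFfin.measure_zero _
  have hsub : Fᶜ ⊆ ⋃ i : Fin n, abs ⁻¹' (cband n (i.1 + 1)) := by
    intro x hx
    simp only [hF, compl_union, mem_inter_iff, mem_compl_iff, mem_singleton_iff, mem_iUnion,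
      Finset.mem_Icc, not_exists, mem_insert_iff, not_or] at hx
    obtain ⟨hx0, hxc⟩ := hx
    have hy : 0 < |x| := abs_pos.mpr hx0
    have hnot : ∀ k, 1 ≤ k → k ≤ n - 1 → |x| ≠ cseq n k := by
      intro k h1 h2 heq
      have := hxc k ⟨h1, h2⟩
      rcases abs_cases x with ⟨hh, _⟩ | ⟨hh, _⟩
      · exact this.1 (by rw [← hh, heq])
      · refine this.2 ?_
        have : -x = cseq n k := by rw [← hh, heq]
        linarith
    obtain ⟨k, hk1, hkn, hky⟩ := cband_cover hn hy hnot
    refine mem_iUnion.mpr ⟨⟨k - 1, by omega⟩, ?_⟩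
    simp only [mem_preimage]
    have : k - 1 + 1 = k := by omega
    rw [this]
    exact hky
  calc (1:ℝ≥0∞) = gaussianReal d 1 Fᶜ := by
        rw [measure_compl (hFfin.measurableSet) (gauss_ne_top d F), hFnull, measure_univ,
          tsub_zero]
      _ ≤ _ := measure_mono hsub

lemma sum_gauss_abs (d : ℝ) {n : ℕ} (hn : 0 < n) :
    ∑ i : Fin n, (gaussianReal d 1) (abs ⁻¹' (cband n (i.1 + 1))) = 1 := by
  rw [← tsum_fintype (L := .unconditional _), ← measure_iUnion (fun i i' h => pre_band_disjoint h)
    (fun i => (measurableSet_cband n (i.1 + 1)).preimage measurable_abs),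
    gauss_abs_iUnion d hn]

end Aux

/-- For a Latin square A of order n = α⁻¹ and (Z₁, Z₂, Z₃) ~ N((δ₁, δ₂, 0), I₃),
the test rejecting when (|Z₁|, |Z₂|, |Z₃|) ∈ R† has rejection probability exactly
α = 1/n for all δ₁, δ₂. -/
theorem stmt15 (n : ℕ) (hn : 0 < n) (A : Fin n → Fin n → Fin n)
    (hA : IsLatinSquare A) (d1 d2 : ℝ) :
    ((gauss3 d1 d2 0)
        {z : ℝ × ℝ × ℝ | (|z.1|, |z.2.1|, |z.2.2|) ∈ Rdag n A}).toReal = 1 / (n : ℝ) := by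
  classical
  have hnR : (0:ℝ) < n := by exact_mod_cast hn
  set S : Fin n × Fin n → Set (ℝ × ℝ × ℝ) := fun p =>
    (abs ⁻¹' cband n (p.1.1 + 1)) ×ˢ ((abs ⁻¹' cband n (p.2.1 + 1)) ×ˢ
      (abs ⁻¹' cband n ((A p.1 p.2).1 + 1))) with hS
  have hset : {z : ℝ × ℝ × ℝ | (|z.1|, |z.2.1|, |z.2.2|) ∈ Rdag n A} = ⋃ p, S p := by
    ext z
    simp only [hS, Rdag, mem_setOf_eq, mem_iUnion, Set.mem_prod, mem_preimage, Prod.exists]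
  have hSmeas : ∀ p, MeasurableSet (S p) := fun p =>
    ((Aux.measurableSet_cband _ _).preimage measurable_abs).prod
      (((Aux.measurableSet_cband _ _).preimage measurable_abs).prod
        ((Aux.measurableSet_cband _ _).preimage measurable_abs))
  have hSdisj : Pairwise (Function.onFun Disjoint S) := by
    intro p q hpq
    rw [Function.onFun, hS, Set.disjoint_left]
    rintro z ⟨hz1, hz2, hz3⟩ ⟨hw1, hw2, hw3⟩
    by_cases h1 : p.1 = q.1
    · have h2 : p.2 ≠ q.2 := fun h => hpq (Prod.ext h1 h)
      exact Set.disjoint_left.mp (Aux.pre_band_disjoint h2) hz2 hw2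
    · exact Set.disjoint_left.mp (Aux.pre_band_disjoint h1) hz1 hw1
  have hprod : ∀ p : Fin n × Fin n, (gauss3 d1 d2 0) (S p) =
      gaussianReal d1 1 (abs ⁻¹' cband n (p.1.1 + 1)) *
        (gaussianReal d2 1 (abs ⁻¹' cband n (p.2.1 + 1)) * ENNReal.ofReal (1 / (n:ℝ))) := by
    intro p
    rw [hS, gauss3, Measure.prod_prod, Measure.prod_prod,
      Aux.gauss0_band (Nat.succ_le_succ (Nat.zero_le _)) (A p.1 p.2).2]
  rw [hset, measure_iUnion hSdisj hSmeas, tsum_fintype]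
  simp_rw [hprod]
  rw [Fintype.sum_prod_type]
  simp_rw [← Finset.mul_sum, ← Finset.sum_mul]
  rw [Aux.sum_gauss_abs d1 hn, Aux.sum_gauss_abs d2 hn, one_mul, one_mul,
    ENNReal.toReal_ofReal (by positivity)]
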